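/- arXiv:1212.3822 — 5 statements merged into one kernel-verified Lean document; each statement's English description precedes it below -/
import Mathlib

section
/- The function ψ : ℝ → ℝ defined by ψ(x) = x(e^x − 1)/(e^x − 1 − x) for x ≠ 0 and ψ(0) = 2 is strictly increasing on ℝ. -/
/-- `ψ(x) = x f'(x)/f(x) = x(e^x − 1)/(e^x − 1 − x)` for `x ≠ 0`, with `ψ(0) = 2`
(the continuous extension), where `f(x) = e^x − 1 − x`. -/
noncomputable def psi (x : ℝ) : ℝ :=
  if x = 0 then 2 else x * (Real.exp x - 1) / (Real.exp x - 1 - x)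

open Real Set

/-- If `F 0 = 0` and `F' > 0` on `(0,∞)`, then `F > 0` on `(0,∞)`. -/
lemma aux_pos_of_deriv_pos (F F' : ℝ → ℝ) (hd : ∀ x, HasDerivAt F (F' x) x)
    (h0 : F 0 = 0) (hp : ∀ x > 0, 0 < F' x) : ∀ x > 0, 0 < F x := by
  intro x hx
  have hm : StrictMonoOn F (Ici 0) := by
    apply strictMonoOn_of_deriv_pos (convex_Ici 0)
    · exact fun y _ => (hd y).continuousAt.continuousWithinAt
    · intro y hy
      rw [interior_Ici] at hy
      rw [(hd y).deriv]
      exact hp y hy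
  have := hm (le_refl (0:ℝ)) (le_of_lt hx) hx
  rwa [h0] at this

/-- If `F 0 = 0` and `F' > 0` on `(-∞,0)`, then `F < 0` on `(-∞,0)`. -/
lemma aux_neg_of_deriv_pos (F F' : ℝ → ℝ) (hd : ∀ x, HasDerivAt F (F' x) x)
    (h0 : F 0 = 0) (hp : ∀ x < 0, 0 < F' x) : ∀ x < 0, F x < 0 := by
  intro x hx
  have hm : StrictMonoOn F (Iic 0) := by
    apply strictMonoOn_of_deriv_pos (convex_Iic 0)
    · exact fun y _ => (hd y).continuousAt.continuousWithinAt
    · intro y hy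
      rw [interior_Iic] at hy
      rw [(hd y).deriv]
      exact hp y hy
  have := hm (le_of_lt hx) (le_refl (0:ℝ)) hx
  rwa [h0] at this

/-- If `F 0 = 0` and `F' < 0` on `(-∞,0)`, then `F > 0` on `(-∞,0)`. -/
lemma aux_pos_of_deriv_neg (F F' : ℝ → ℝ) (hd : ∀ x, HasDerivAt F (F' x) x)
    (h0 : F 0 = 0) (hp : ∀ x < 0, F' x < 0) : ∀ x < 0, 0 < F x := by
  intro x hx
  have hm : StrictAntiOn F (Iic 0) := by
    apply strictAntiOn_of_deriv_neg (convex_Iic 0)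
    · exact fun y _ => (hd y).continuousAt.continuousWithinAt
    · intro y hy
      rw [interior_Iic] at hy
      rw [(hd y).deriv]
      exact hp y hy
  have := hm (le_of_lt hx) (le_refl (0:ℝ)) hx
  rwa [h0] at this

lemma f_pos {x : ℝ} (hx : x ≠ 0) : 0 < Real.exp x - 1 - x := by
  have := Real.add_one_lt_exp hx
  linarith

/-- `G x = 2 e^x - x^2 - 2x - 2` -/
noncomputable def Gfun (x : ℝ) : ℝ := 2 * Real.exp x - x ^ 2 - 2 * x - 2

lemma Gfun_hasDeriv (x : ℝ) :
    HasDerivAt Gfun (2 * Real.exp x - 2 * x - 2) x := by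
  have := ((((Real.hasDerivAt_exp x).const_mul 2).sub (hasDerivAt_pow 2 x)).sub
    ((hasDerivAt_id x).const_mul 2)).sub_const (2 : ℝ)
  refine this.congr_deriv ?_
  simp

lemma Gderiv_pos {x : ℝ} (hx : x ≠ 0) : 0 < 2 * Real.exp x - 2 * x - 2 := by
  have := Real.add_one_lt_exp hx
  linarith

lemma Gfun_pos : ∀ x > 0, 0 < Gfun x :=
  aux_pos_of_deriv_pos Gfun _ Gfun_hasDeriv (by simp [Gfun])
    (fun x hx => Gderiv_pos (ne_of_gt hx))

lemma Gfun_neg : ∀ x < 0, Gfun x < 0 :=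
  aux_neg_of_deriv_pos Gfun _ Gfun_hasDeriv (by simp [Gfun])
    (fun x hx => Gderiv_pos (ne_of_lt hx))

/-- `N x = (e^x)^2 - (2+x^2) e^x + 1`, the numerator of `ψ'`. -/
noncomputable def Nfun (x : ℝ) : ℝ := (Real.exp x) ^ 2 - (2 + x ^ 2) * Real.exp x + 1

lemma Nfun_hasDeriv (x : ℝ) : HasDerivAt Nfun (Real.exp x * Gfun x) x := by
  have h1 : HasDerivAt (fun y => (Real.exp y) ^ 2)
      ((2 : ℕ) * (Real.exp x) ^ 1 * Real.exp x) x := (Real.hasDerivAt_exp x).pow 2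
  have h2 : HasDerivAt (fun y : ℝ => (2 + y ^ 2) * Real.exp y)
      ((0 + 2 * x ^ 1) * Real.exp x + (2 + x ^ 2) * Real.exp x) x :=
    ((hasDerivAt_const x (2:ℝ)).add (hasDerivAt_pow 2 x)).mul (Real.hasDerivAt_exp x)
  have := (h1.sub h2).add_const (1 : ℝ)
  refine this.congr_deriv ?_
  simp [Gfun]
  ring

lemma Nfun_pos {x : ℝ} (hx : x ≠ 0) : 0 < Nfun x := by
  rcases hx.lt_or_gt with h | h
  · exact aux_pos_of_deriv_neg Nfun _ Nfun_hasDeriv (by norm_num [Nfun])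
      (fun y hy => mul_neg_of_pos_of_neg (Real.exp_pos y) (Gfun_neg y hy)) x h
  · exact aux_pos_of_deriv_pos Nfun _ Nfun_hasDeriv (by norm_num [Nfun])
      (fun y hy => mul_pos (Real.exp_pos y) (Gfun_pos y hy)) x h

/-- `H x = (x-2) e^x + x + 2`; `ψ x - 2` has the sign of `H x`. -/
noncomputable def Hfun (x : ℝ) : ℝ := (x - 2) * Real.exp x + x + 2

lemma Hfun_hasDeriv (x : ℝ) :
    HasDerivAt Hfun ((x - 1) * Real.exp x + 1) x := by
  have h1 : HasDerivAt (fun y : ℝ => (y - 2) * Real.exp y)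
      (1 * Real.exp x + (x - 2) * Real.exp x) x :=
    ((hasDerivAt_id x).sub_const 2).mul (Real.hasDerivAt_exp x)
  have := (h1.add (hasDerivAt_id x)).add_const (2 : ℝ)
  refine this.congr_deriv ?_
  ring

lemma Hderiv_pos {x : ℝ} (hx : x ≠ 0) : 0 < (x - 1) * Real.exp x + 1 := by
  have h1 : (-x) + 1 < Real.exp (-x) := Real.add_one_lt_exp (neg_ne_zero.mpr hx)
  have h2 : (1 - x) * Real.exp x < Real.exp (-x) * Real.exp x :=
    mul_lt_mul_of_pos_right (by linarith) (Real.exp_pos x)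
  rw [← Real.exp_add] at h2
  simp at h2
  nlinarith [Real.exp_pos x]

lemma Hfun_pos : ∀ x > 0, 0 < Hfun x :=
  aux_pos_of_deriv_pos Hfun _ Hfun_hasDeriv (by simp [Hfun])
    (fun x hx => Hderiv_pos (ne_of_gt hx))

lemma Hfun_neg : ∀ x < 0, Hfun x < 0 :=
  aux_neg_of_deriv_pos Hfun _ Hfun_hasDeriv (by simp [Hfun])
    (fun x hx => Hderiv_pos (ne_of_lt hx))

lemma psi_hasDeriv {x : ℝ} (hx : x ≠ 0) :
    HasDerivAt psi (Nfun x / (Real.exp x - 1 - x) ^ 2) x := by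
  have hv : Real.exp x - 1 - x ≠ 0 := ne_of_gt (f_pos hx)
  have hu : HasDerivAt (fun y => y * (Real.exp y - 1))
      (1 * (Real.exp x - 1) + x * Real.exp x) x :=
    (hasDerivAt_id x).mul ((Real.hasDerivAt_exp x).sub_const 1)
  have hvd : HasDerivAt (fun y => Real.exp y - 1 - y) (Real.exp x - 1) x := by
    exact ((Real.hasDerivAt_exp x).sub_const 1).sub (hasDerivAt_id x)
  have hg := hu.div hvd hv
  have heq : psi =ᶠ[nhds x] fun y => y * (Real.exp y - 1) / (Real.exp y - 1 - y) := by
    filter_upwards [isOpen_ne.mem_nhds (show x ≠ (0:ℝ) from hx)] with y hy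
    simp [psi, hy]
  have hD : ((1 * (Real.exp x - 1) + x * Real.exp x) * (Real.exp x - 1 - x) -
      x * (Real.exp x - 1) * (Real.exp x - 1)) / (Real.exp x - 1 - x) ^ 2 =
      Nfun x / (Real.exp x - 1 - x) ^ 2 := by
    congr 1
    simp only [Nfun]
    ring
  rw [hD] at hg
  exact hg.congr_of_eventuallyEq heq

lemma psi_mono_Ioi : StrictMonoOn psi (Ioi 0) := by
  apply strictMonoOn_of_deriv_pos (convex_Ioi 0)
  · intro y hy
    exact (psi_hasDeriv (ne_of_gt (mem_Ioi.mp hy))).continuousAt.continuousWithinAt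
  · intro y hy
    rw [isOpen_Ioi.interior_eq] at hy
    have hy0 : y ≠ 0 := ne_of_gt (mem_Ioi.mp hy)
    rw [(psi_hasDeriv hy0).deriv]
    exact div_pos (Nfun_pos hy0) (pow_pos (f_pos hy0) 2)

lemma psi_mono_Iio : StrictMonoOn psi (Iio 0) := by
  apply strictMonoOn_of_deriv_pos (convex_Iio 0)
  · intro y hy
    exact (psi_hasDeriv (ne_of_lt (mem_Iio.mp hy))).continuousAt.continuousWithinAt
  · intro y hy
    rw [isOpen_Iio.interior_eq] at hy
    have hy0 : y ≠ 0 := ne_of_lt (mem_Iio.mp hy)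
    rw [(psi_hasDeriv hy0).deriv]
    exact div_pos (Nfun_pos hy0) (pow_pos (f_pos hy0) 2)

lemma psi_lt_two {x : ℝ} (hx : x < 0) : psi x < 2 := by
  have hx0 : x ≠ 0 := ne_of_lt hx
  have hd := f_pos hx0
  have hH := Hfun_neg x hx
  simp only [psi, hx0, if_false]
  rw [div_lt_iff₀ hd]
  simp only [Hfun] at hH
  nlinarith

lemma two_lt_psi {x : ℝ} (hx : 0 < x) : 2 < psi x := by
  have hx0 : x ≠ 0 := ne_of_gt hx
  have hd := f_pos hx0
  have hH := Hfun_pos x hx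
  simp only [psi, hx0, if_false]
  rw [lt_div_iff₀ hd]
  simp only [Hfun] at hH
  nlinarith

/-- The function `ψ` is strictly increasing on `ℝ`. -/
theorem psi_strictMono : StrictMono psi := by
  have h0 : psi 0 = 2 := by simp [psi]
  intro a b hab
  rcases lt_trichotomy a 0 with ha | ha | ha
  · rcases lt_trichotomy b 0 with hb | hb | hb
    · exact psi_mono_Iio ha hb hab
    · rw [hb, h0]; exact psi_lt_two ha
    · calc psi a < 2 := psi_lt_two ha
        _ < psi b := two_lt_psi hb
  · rw [ha, h0]
    exact two_lt_psi (ha ▸ hab)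
  · exact psi_mono_Ioi ha (lt_trans ha hab) hab
end

section
/- For every real λ > 0, writing f(λ) = e^λ − 1 − λ, the quantity V(λ) = λ²e^λ/f(λ) + λ(e^λ − 1)/f(λ) − (λ(e^λ − 1)/f(λ))² satisfies λ/3 ≤ V(λ) ≤ λ. -/
private lemma mono_aux {g g' : ℝ → ℝ} (hd : ∀ x, HasDerivAt g (g' x) x)
    (h0 : g 0 = 0) (hg' : ∀ x, 0 ≤ x → 0 ≤ g' x) {x : ℝ} (hx : 0 ≤ x) : 0 ≤ g x := by
  have hmono : MonotoneOn g (Set.Ici (0:ℝ)) := by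
    apply monotoneOn_of_deriv_nonneg (convex_Ici 0)
    · exact fun y _ => (hd y).continuousAt.continuousWithinAt
    · exact fun y _ => (hd y).differentiableAt.differentiableWithinAt
    · intro y hy
      rw [(hd y).deriv]
      exact hg' y (le_of_lt (by simpa using hy))
  calc (0:ℝ) = g 0 := h0.symm
  _ ≤ g x := hmono Set.self_mem_Ici hx hx

/-- Generic derivative for `A e^{2x} + (a x² + b x + c) e^x + (d x² + e x + f)`. -/
private lemma hd_aux (A a b c d e f : ℝ) (x : ℝ) :
    HasDerivAt (fun x => A * Real.exp x ^ 2 + (a*x^2 + b*x + c) * Real.exp x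
        + (d*x^2 + e*x + f))
      (2*A * Real.exp x ^ 2 + (a*x^2 + (b+2*a)*x + (c+b)) * Real.exp x
        + (2*d*x + e)) x := by
  have h1 : HasDerivAt (fun x : ℝ => Real.exp x ^ 2) (2 * Real.exp x ^ 2) x := by
    have := (Real.hasDerivAt_exp x).pow 2
    exact this.congr_deriv (by norm_num; ring)
  have h2 : HasDerivAt (fun x : ℝ => a*x^2 + b*x + c) (2*a*x + b) x := by
    have := (((hasDerivAt_pow 2 x).const_mul a).add ((hasDerivAt_id x).const_mul b)).add_const c
    exact this.congr_deriv (by norm_num; ring)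
  have h3 : HasDerivAt (fun x : ℝ => d*x^2 + e*x + f) (2*d*x + e) x := by
    have := (((hasDerivAt_pow 2 x).const_mul d).add ((hasDerivAt_id x).const_mul e)).add_const f
    exact this.congr_deriv (by norm_num; ring)
  have := ((h1.const_mul A).add (h2.mul (Real.hasDerivAt_exp x))).add h3
  exact this.congr_deriv (by ring)

private lemma pade (x : ℝ) (hx : 0 ≤ x) : (2 - x) * Real.exp x ≤ 2 + x := by
  -- h1(x) = (x-1) e^x + 1 ≥ 0 on [0,∞)
  have h1 : ∀ y : ℝ, 0 ≤ y → 0 ≤ 0 * Real.exp y ^ 2 + (0*y^2 + 1*y + (-1)) * Real.exp y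
      + (0*y^2 + 0*y + 1) := by
    intro y hy
    refine mono_aux (fun z => hd_aux 0 0 1 (-1) 0 0 1 z) (by norm_num) ?_ hy
    intro z hz
    have := (Real.exp_pos z).le
    nlinarith [mul_nonneg hz this]
  -- h0(x) = (x-2) e^x + (x+2) ≥ 0 on [0,∞)
  have h0 : 0 ≤ 0 * Real.exp x ^ 2 + (0*x^2 + 1*x + (-2)) * Real.exp x
      + (0*x^2 + 1*x + 2) := by
    refine mono_aux (fun z => hd_aux 0 0 1 (-2) 0 1 2 z) (by norm_num) ?_ hx
    intro z hz
    have := h1 z hz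
    nlinarith
  nlinarith

private lemma phi_nonneg (x : ℝ) (hx : 0 ≤ x) :
    0 ≤ 2 * Real.exp x ^ 2 + (2*x - 3*x^2 - 4) * Real.exp x + (2 - 2*x - x^2) := by
  have hexp := fun z : ℝ => (Real.exp_pos z).le
  -- ψ(x) = 32 e^x − 3x² − 22x − 32 ≥ 0
  have hpsi : ∀ y : ℝ, 0 ≤ y → 0 ≤ 0 * Real.exp y ^ 2 + (0*y^2 + 0*y + 32) * Real.exp y
      + ((-3)*y^2 + (-22)*y + (-32)) := by
    intro y hy
    refine mono_aux (fun z => hd_aux 0 0 0 32 (-3) (-22) (-32) z) (by norm_num) ?_ hy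
    intro z hz
    have h := Real.add_one_le_exp z
    nlinarith
  -- φ₄ = 32 e^{2x} + (−3x²−22x−32) e^x = e^x ψ(x) ≥ 0
  have h4 : ∀ y : ℝ, 0 ≤ y → 0 ≤ 32 * Real.exp y ^ 2 + ((-3)*y^2 + (-22)*y + (-32)) * Real.exp y := by
    intro y hy
    have := hpsi y hy
    nlinarith [mul_nonneg (hexp y) this]
  -- φ₃ = 16 e^{2x} + (−3x²−16x−16) e^x
  have h3 : ∀ y : ℝ, 0 ≤ y → 0 ≤ 16 * Real.exp y ^ 2 + ((-3)*y^2 + (-16)*y + (-16)) * Real.exp y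
      + (0*y^2 + 0*y + 0) := by
    intro y hy
    refine mono_aux (fun z => hd_aux 16 (-3) (-16) (-16) 0 0 0 z) (by norm_num) ?_ hy
    intro z hz
    have := h4 z hz
    nlinarith
  -- φ₂ = 8 e^{2x} + (−3x²−10x−6) e^x − 2
  have h2 : ∀ y : ℝ, 0 ≤ y → 0 ≤ 8 * Real.exp y ^ 2 + ((-3)*y^2 + (-10)*y + (-6)) * Real.exp y
      + (0*y^2 + 0*y + (-2)) := by
    intro y hy
    refine mono_aux (fun z => hd_aux 8 (-3) (-10) (-6) 0 0 (-2) z) (by norm_num) ?_ hy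
    intro z hz
    have := h3 z hz
    nlinarith
  -- φ₁ = 4 e^{2x} + (−3x²−4x−2) e^x − 2x − 2
  have h1 : ∀ y : ℝ, 0 ≤ y → 0 ≤ 4 * Real.exp y ^ 2 + ((-3)*y^2 + (-4)*y + (-2)) * Real.exp y
      + (0*y^2 + (-2)*y + (-2)) := by
    intro y hy
    refine mono_aux (fun z => hd_aux 4 (-3) (-4) (-2) 0 (-2) (-2) z) (by norm_num) ?_ hy
    intro z hz
    have := h2 z hz
    nlinarith
  -- φ₀ = 2 e^{2x} + (−3x²+2x−4) e^x + (−x²−2x+2)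
  have h0 : 0 ≤ 2 * Real.exp x ^ 2 + ((-3)*x^2 + 2*x + (-4)) * Real.exp x
      + ((-1)*x^2 + (-2)*x + 2) := by
    refine mono_aux (fun z => hd_aux 2 (-3) 2 (-4) (-1) (-2) 2 z) (by norm_num) ?_ hx
    intro z hz
    have := h1 z hz
    nlinarith
  nlinarith

/-- The variance `V(λ)` of the truncated Poisson random variable `Z(λ)`:
`V(λ) = λ²e^λ/f(λ) + λ(e^λ−1)/f(λ) − (λ(e^λ−1)/f(λ))²`, where `f(λ) = e^λ − 1 − λ`. -/
noncomputable def truncPoissonVar (lam : ℝ) : ℝ :=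
  lam ^ 2 * Real.exp lam / (Real.exp lam - 1 - lam)
    + lam * (Real.exp lam - 1) / (Real.exp lam - 1 - lam)
    - (lam * (Real.exp lam - 1) / (Real.exp lam - 1 - lam)) ^ 2

/-- For every `λ > 0`, the variance of the truncated Poisson satisfies
`λ/3 ≤ V(λ) ≤ λ`. -/
theorem truncPoissonVar_bounds (lam : ℝ) (hlam : 0 < lam) :
    lam / 3 ≤ truncPoissonVar lam ∧ truncPoissonVar lam ≤ lam := by
  set E := Real.exp lam with hE
  have hf : 0 < E - 1 - lam := by
    have := Real.add_one_lt_exp (ne_of_gt hlam)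
    linarith
  have hf2 : 0 < (E - 1 - lam) ^ 2 := by positivity
  have hV : truncPoissonVar lam =
      (lam^2 * E * (E - 1 - lam) + lam * (E - 1) * (E - 1 - lam) - lam^2 * (E - 1)^2)
        / (E - 1 - lam)^2 := by
    unfold truncPoissonVar
    rw [← hE]
    field_simp
  constructor
  · rw [hV, le_div_iff₀ hf2]
    have hphi := phi_nonneg lam hlam.le
    nlinarith [mul_nonneg hlam.le hphi]
  · rw [hV, div_le_iff₀ hf2]
    have hp := pade lam hlam.le
    nlinarith [mul_nonneg (mul_nonneg hlam.le hlam.le) (sub_nonneg.mpr hp)]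
end

section
/- Fix an integer k ≥ 3, a real c ∈ (2/k, 1], and let α_k = e·k^{−k/(k−2)}. Taking ζ₁ = (ck)^{−1/2}·α^{1/2} and ζ₂ = 1 − α, the following hold: (i) for all α ∈ (0, α_k), H_k(α,(ζ₁,ζ₂);c) ≤ (cα)(k/2 − 1)·ln(α/α_k); (ii) for every δ ∈ (0, 0.99·α_k] there exists ε > 0, depending only on k and δ, such that H_k(α,(ζ₁,ζ₂);c) < −ε for all c ∈ (2/k,1] and all α ∈ [δ, 0.99·α_k]. In both cases ζ₂ ≥ 1 − α_k > 0. -/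
/-- `f(x) = e^x − 1 − x`. -/
noncomputable def fE (x : ℝ) : ℝ := Real.exp x - 1 - x

/-- The entropy function `H(α) = −α ln α − (1−α) ln(1−α)`; since `Real.log 0 = 0`
in Mathlib, the convention `x ln x = 0` at `x = 0` holds automatically. -/
noncomputable def Hent (a : ℝ) : ℝ := -a * Real.log a - (1 - a) * Real.log (1 - a)

/-- `H_k(α,(ζ₁,ζ₂);c)` with `λ = λ(ck)` passed as the argument `lam`:
`cH(α) + ckα ln(α/ζ₁) + ck(1−α) ln((1−α)/ζ₂) + ln[(f(λ(ζ₂+ζ₁)) + f(λ(ζ₂−ζ₁)))/(2f(λ))]`. -/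
noncomputable def Hk (k : ℕ) (c a ζ₁ ζ₂ lam : ℝ) : ℝ :=
  c * Hent a + c * k * a * Real.log (a / ζ₁) + c * k * (1 - a) * Real.log ((1 - a) / ζ₂)
    + Real.log ((fE (lam * (ζ₂ + ζ₁)) + fE (lam * (ζ₂ - ζ₁))) / (2 * fE lam))

/-- `α_k = e·k^{−k/(k−2)}`. -/
noncomputable def alphaK (k : ℕ) : ℝ :=
  Real.exp 1 * (k : ℝ) ^ (-(k : ℝ) / ((k : ℝ) - 2))


section AuxiliaryLemmas

lemma fE_pos {x : ℝ} (hx : x ≠ 0) : 0 < fE x := by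
  have := Real.add_one_lt_exp hx
  unfold fE; linarith

lemma fE_nonneg (x : ℝ) : 0 ≤ fE x := by
  have := Real.add_one_le_exp x; unfold fE; linarith

lemma key_convex {x lam : ℝ} (hx : 0 ≤ x) (hlam : 0 < lam) (hxl : x ≤ lam) :
    lam * (Real.exp x - 1) ≤ x * (Real.exp lam - 1) := by
  have h := convexOn_exp.2 (Set.mem_univ (0:ℝ)) (Set.mem_univ lam)
    (show (0:ℝ) ≤ 1 - x / lam by
      rw [sub_nonneg, div_le_one hlam]; exact hxl)
    (show (0:ℝ) ≤ x / lam by positivity)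
    (by ring)
  simp only [smul_eq_mul, mul_zero, zero_add, Real.exp_zero, mul_one] at h
  rw [div_mul_cancel₀ _ hlam.ne'] at h
  have h2 : lam * Real.exp x ≤ lam * ((1 - x / lam) + x / lam * Real.exp lam) := by
    exact mul_le_mul_of_nonneg_left h hlam.le
  have h3 : lam * ((1 - x / lam) + x / lam * Real.exp lam)
      = lam - x + x * Real.exp lam := by field_simp
  nlinarith [h2, h3]

lemma log_fE_tangent {y lam : ℝ} (hy : 0 < y) (hyl : y < lam) :
    Real.log (fE y) ≤ Real.log (fE lam) + (Real.exp lam - 1) / fE lam * (y - lam) := by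
  have hlam : 0 < lam := hy.trans hyl
  have hfc : Continuous fE := by unfold fE; continuity
  obtain ⟨ξ, hξ, hslope⟩ := exists_hasDerivAt_eq_slope (fun x => Real.log (fE x))
      (fun x => (Real.exp x - 1) / fE x) hyl
      (hfc.continuousOn.log (fun x hx => (fE_pos (by
        have := hx.1; intro h0; rw [h0] at this; linarith)).ne'))
      (fun x hx => by
        have h1 : HasDerivAt fE (Real.exp x - 1) x := by
          have := ((Real.hasDerivAt_exp x).sub_const 1).sub (hasDerivAt_id x)
          exact this
        exact h1.log (fE_pos (by have h2 := hx.1; have : (0:ℝ) < x := hy.trans h2; exact this.ne')).ne')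
  have hξ0 : 0 < ξ := hy.trans hξ.1
  have hφ : (Real.exp lam - 1) / fE lam ≤ (Real.exp ξ - 1) / fE ξ := by
    rw [div_le_div_iff₀ (fE_pos hlam.ne') (fE_pos hξ0.ne')]
    have hkey := key_convex hξ0.le hlam (hξ.2.le.trans (le_refl lam))
    unfold fE
    nlinarith [hkey]
  have hslope' : (Real.log (fE lam) - Real.log (fE y)) / (lam - y)
      = (Real.exp ξ - 1) / fE ξ := hslope.symm
  have hly : 0 < lam - y := by linarith
  have h5 : (lam - y) * ((Real.exp lam - 1) / fE lam)
      ≤ (lam - y) * ((Real.exp ξ - 1) / fE ξ) := mul_le_mul_of_nonneg_left hφ hly.le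
  rw [← hslope'] at h5
  rw [mul_div_cancel₀ _ hly.ne'] at h5
  nlinarith [h5]


lemma alphaK_eq (k : ℕ) (hk : 3 ≤ k) :
    alphaK k = Real.exp 1 / ((k : ℝ) * (k : ℝ) ^ (2 / ((k : ℝ) - 2))) := by
  have hk3 : (3:ℝ) ≤ (k:ℝ) := by exact_mod_cast hk
  have hk0 : (0:ℝ) < (k:ℝ) := by linarith
  have hne : (k:ℝ) - 2 ≠ 0 := by linarith
  unfold alphaK
  rw [show -(k:ℝ) / ((k:ℝ) - 2) = -(1 + 2 / ((k:ℝ) - 2)) by field_simp [hne]; ring]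
  rw [Real.rpow_neg hk0.le, Real.rpow_add hk0, Real.rpow_one, div_eq_mul_inv, mul_inv]
  ring

lemma alphaK_pos (k : ℕ) (hk : 3 ≤ k) : 0 < alphaK k := by
  have hk3 : (3:ℝ) ≤ (k:ℝ) := by exact_mod_cast hk
  have hk0 : (0:ℝ) < (k:ℝ) := by linarith
  unfold alphaK
  positivity

lemma Q_lb (k : ℕ) (hk : 3 ≤ k) :
    1 + 2 * Real.log k / ((k : ℝ) - 2) ≤ (k : ℝ) ^ (2 / ((k : ℝ) - 2)) := by
  have hk3 : (3:ℝ) ≤ (k:ℝ) := by exact_mod_cast hk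
  have hk0 : (0:ℝ) < (k:ℝ) := by linarith
  rw [Real.rpow_def_of_pos hk0]
  have h2 : (1:ℝ) + 2 * Real.log k / ((k:ℝ) - 2) = Real.log (k:ℝ) * (2 / ((k:ℝ) - 2)) + 1 := by
    ring
  rw [h2]
  exact Real.add_one_le_exp _

lemma logk_ge_one (k : ℕ) (hk : 3 ≤ k) : 1 ≤ Real.log k := by
  have hk3 : (3:ℝ) ≤ (k:ℝ) := by exact_mod_cast hk
  have h3 : (1:ℝ) ≤ Real.log 3 := by
    rw [Real.le_log_iff_exp_le (by norm_num)]
    linarith [Real.exp_one_lt_d9]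
  exact h3.trans ((Real.log_le_log_iff (by norm_num) (by linarith)).2 hk3)

lemma Q_pos (k : ℕ) (hk : 3 ≤ k) : 0 < (k : ℝ) ^ (2 / ((k : ℝ) - 2)) := by
  have hk3 : (3:ℝ) ≤ (k:ℝ) := by exact_mod_cast hk
  exact Real.rpow_pos_of_pos (by linarith) _

lemma Q_ge_one (k : ℕ) (hk : 3 ≤ k) : 1 ≤ (k : ℝ) ^ (2 / ((k : ℝ) - 2)) := by
  have hk3 : (3:ℝ) ≤ (k:ℝ) := by exact_mod_cast hk
  have hQ := Q_lb k hk
  have hL := logk_ge_one k hk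
  have h1 : 0 ≤ 2 * Real.log k / ((k:ℝ) - 2) :=
    div_nonneg (by linarith) (by linarith)
  linarith

lemma alphaK_lt_one (k : ℕ) (hk : 3 ≤ k) : alphaK k < 1 := by
  have hk3 : (3:ℝ) ≤ (k:ℝ) := by exact_mod_cast hk
  have hQ1 := Q_ge_one k hk
  have hQp := Q_pos k hk
  rw [alphaK_eq k hk, div_lt_one (by positivity)]
  nlinarith [Real.exp_one_lt_d9, hk3, hQ1]

lemma E1 (k : ℕ) (hk : 3 ≤ k) : 2 * alphaK k ≤ Real.log 2 := by
  have hk3 : (3:ℝ) ≤ (k:ℝ) := by exact_mod_cast hk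
  have hk0 : (0:ℝ) < (k:ℝ) := by linarith
  have hD : (0:ℝ) < (k:ℝ) - 2 := by linarith
  have hQ := Q_lb k hk
  have hL := logk_ge_one k hk
  have hQp := Q_pos k hk
  have he := Real.exp_one_lt_d9
  have hl2 := Real.log_two_gt_d9
  set Q := (k:ℝ) ^ (2 / ((k:ℝ) - 2)) with hQdef
  set L := Real.log (k:ℝ) with hLdef
  have h1 : (k:ℝ)^2/((k:ℝ)-2) ≤ (k:ℝ) * Q := by
    rw [div_le_iff₀ hD]
    have h2 : (k:ℝ)*(1 + 2*L/((k:ℝ)-2))*((k:ℝ)-2) ≤ (k:ℝ) * Q * ((k:ℝ)-2) :=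
      mul_le_mul_of_nonneg_right (mul_le_mul_of_nonneg_left hQ hk0.le) hD.le
    have h3 : (k:ℝ)*(1 + 2*L/((k:ℝ)-2))*((k:ℝ)-2) = (k:ℝ)*((k:ℝ)-2) + 2*(k:ℝ)*L := by
      field_simp
    nlinarith [hL, hk0]
  have h4 : 2*Real.exp 1 ≤ Real.log 2 * ((k:ℝ)^2/((k:ℝ)-2)) := by
    rw [← mul_div_assoc, le_div_iff₀ hD]
    nlinarith [sq_nonneg ((k:ℝ) - 3.922), he, hl2, hk3]
  have h5 : Real.log 2 * ((k:ℝ)^2/((k:ℝ)-2)) ≤ Real.log 2 * ((k:ℝ)*Q) :=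
    mul_le_mul_of_nonneg_left h1 (by linarith)
  calc 2 * alphaK k = 2*Real.exp 1/((k:ℝ)*Q) := by rw [alphaK_eq k hk]; ring
  _ ≤ Real.log 2 := by
      rw [div_le_iff₀ (by positivity)]
      linarith

lemma E2 (k : ℕ) (hk : 3 ≤ k) : alphaK k * ((k:ℝ)/2 + 1) ≤ Real.log k := by
  have hk3 : (3:ℝ) ≤ (k:ℝ) := by exact_mod_cast hk
  have hk0 : (0:ℝ) < (k:ℝ) := by linarith
  have hD : (0:ℝ) < (k:ℝ) - 2 := by linarith
  have hQ := Q_lb k hk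
  have hL := logk_ge_one k hk
  have hQp := Q_pos k hk
  have he := Real.exp_one_lt_d9
  have hl2 := Real.log_two_gt_d9
  set Q := (k:ℝ) ^ (2 / ((k:ℝ) - 2)) with hQdef
  set L := Real.log (k:ℝ) with hLdef
  -- key: e*(k+2)*(k-2) ≤ 2*k*L*(k-2) + 4*k*L^2
  have hkey : Real.exp 1*((k:ℝ)+2)*((k:ℝ)-2) ≤ 2*(k:ℝ)*L*((k:ℝ)-2) + 4*(k:ℝ)*L^2 := by
    rcases eq_or_lt_of_le hk with hk3' | hk4
    · have : (k:ℝ) = 3 := by exact_mod_cast hk3'.symm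
      rw [this]
      nlinarith [hL, he]
    · have hk4' : (4:ℝ) ≤ (k:ℝ) := by exact_mod_cast hk4
      have hlog4 : Real.log 4 = 2 * Real.log 2 := by
        rw [show (4:ℝ) = 2^2 by norm_num, Real.log_pow]
        push_cast; ring
      have hL4 : 2 * Real.log 2 ≤ L := by
        rw [← hlog4, hLdef]
        exact (Real.log_le_log_iff (by norm_num) (by linarith)).2 hk4'
      have h2L : Real.exp 1 ≤ 2 * L := by linarith
      have hint1 : 0 ≤ (2*L - Real.exp 1)*((k:ℝ)^2 - 4) := by
        apply mul_nonneg (by linarith)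
        nlinarith [hk4']
      have hint2 : 0 ≤ 4*(k:ℝ)*L*(L-1) :=
        mul_nonneg (mul_nonneg (by positivity) (by linarith)) (by linarith)
      nlinarith [hint1, hint2, hL]
  have h1 : (k:ℝ)*L + 2*(k:ℝ)*L^2/((k:ℝ)-2) ≤ L * ((k:ℝ) * Q) := by
    have h2 : L * ((k:ℝ)*(1 + 2*L/((k:ℝ)-2))) ≤ L * ((k:ℝ) * Q) := by
      apply mul_le_mul_of_nonneg_left _ (by linarith)
      nlinarith [hQ, hk0]
    have h3 : L * ((k:ℝ)*(1 + 2*L/((k:ℝ)-2))) = (k:ℝ)*L + 2*(k:ℝ)*L^2/((k:ℝ)-2) := by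
      field_simp
    linarith
  have h4 : Real.exp 1 * ((k:ℝ)/2+1) ≤ (k:ℝ)*L + 2*(k:ℝ)*L^2/((k:ℝ)-2) := by
    rw [show (k:ℝ)*L + 2*(k:ℝ)*L^2/((k:ℝ)-2) = ((k:ℝ)*L*((k:ℝ)-2) + 2*(k:ℝ)*L^2)/((k:ℝ)-2) by
      field_simp]
    rw [le_div_iff₀ hD]
    nlinarith [hkey]
  calc alphaK k * ((k:ℝ)/2+1) = Real.exp 1 * ((k:ℝ)/2+1)/((k:ℝ)*Q) := by
        rw [alphaK_eq k hk]; ring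
  _ ≤ L := by
      rw [div_le_iff₀ (by positivity)]
      linarith [h4, h1]

lemma alphaK_interp (k : ℕ) (hk : 3 ≤ k) {t : ℝ} (ht2 : 2 < t) (htk : t ≤ (k:ℝ)) :
    alphaK k * (t/2 + 1) ≤ Real.log t := by
  have hk3 : (3:ℝ) ≤ (k:ℝ) := by exact_mod_cast hk
  have hD : (0:ℝ) < (k:ℝ) - 2 := by linarith
  set θ := ((k:ℝ) - t)/((k:ℝ) - 2) with hθdef
  have hθ0 : 0 ≤ θ := div_nonneg (by linarith) hD.le
  have hθ1 : θ ≤ 1 := by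
    rw [hθdef, div_le_one hD]; linarith
  have hcomb : θ * 2 + (1-θ) * (k:ℝ) = t := by
    rw [hθdef]; field_simp; ring
  have hconc := (strictConcaveOn_log_Ioi.concaveOn).2 (Set.mem_Ioi.2 (by norm_num : (0:ℝ) < 2))
    (Set.mem_Ioi.2 (by linarith : (0:ℝ) < (k:ℝ))) hθ0 (by linarith : 0 ≤ 1 - θ) (by ring)
  simp only [smul_eq_mul] at hconc
  rw [hcomb] at hconc
  have h1 : θ * (2*alphaK k) ≤ θ * Real.log 2 := mul_le_mul_of_nonneg_left (E1 k hk) hθ0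
  have h2 : (1-θ) * (alphaK k * ((k:ℝ)/2+1)) ≤ (1-θ) * Real.log k :=
    mul_le_mul_of_nonneg_left (E2 k hk) (by linarith)
  have h3 : alphaK k * (t/2+1) = θ*(2*alphaK k) + (1-θ)*(alphaK k*((k:ℝ)/2+1)) := by
    have ht : t = θ * 2 + (1-θ) * (k:ℝ) := hcomb.symm
    rw [ht]; ring
  linarith

end AuxiliaryLemmas

set_option maxHeartbeats 2000000 in
/-- Claim (small α): for `k ≥ 3`, `c ∈ (2/k, 1]`, with `λ = λ(ck)`, taking
`ζ₁ = (ck)^{−1/2} α^{1/2}` and `ζ₂ = 1 − α`: (i) for all `α ∈ (0, α_k)`,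
`H_k(α,ζ;c) ≤ (cα)(k/2 − 1) ln(α/α_k)`; (ii) for every `δ ∈ (0, 0.99 α_k]` there is
`ε > 0` depending only on `k` and `δ` with `H_k(α,ζ;c) < −ε` for all `c ∈ (2/k,1]` and
all `α ∈ [δ, 0.99 α_k]`. In both cases `ζ₂ = 1 − α ≥ 1 − α_k > 0`. -/
theorem Hk_claim_small_alpha (k : ℕ) (hk : 3 ≤ k) :
    (∀ c lam a : ℝ, 2 / (k : ℝ) < c → c ≤ 1 → 0 < lam → psi lam = c * k →
      0 < a → a < alphaK k →
      Hk k c a (Real.sqrt a / Real.sqrt (c * k)) (1 - a) lam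
        ≤ c * a * ((k : ℝ) / 2 - 1) * Real.log (a / alphaK k)) ∧
    (∀ δ : ℝ, 0 < δ → δ ≤ 0.99 * alphaK k →
      ∃ ε > (0 : ℝ), ∀ c lam a : ℝ, 2 / (k : ℝ) < c → c ≤ 1 → 0 < lam → psi lam = c * k →
        δ ≤ a → a ≤ 0.99 * alphaK k →
        Hk k c a (Real.sqrt a / Real.sqrt (c * k)) (1 - a) lam < -ε) ∧
    (∀ a : ℝ, a ≤ alphaK k → 1 - alphaK k ≤ 1 - a) ∧
    0 < 1 - alphaK k := by
  have hk3 : (3:ℝ) ≤ (k:ℝ) := by exact_mod_cast hk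
  have hk0 : (0:ℝ) < (k:ℝ) := by linarith
  have hα_pos := alphaK_pos k hk
  have hα1 := alphaK_lt_one k hk
  have hmain : ∀ c lam a : ℝ, 2 / (k : ℝ) < c → c ≤ 1 → 0 < lam → psi lam = c * k →
      0 < a → a < alphaK k →
      Hk k c a (Real.sqrt a / Real.sqrt (c * k)) (1 - a) lam
        ≤ c * a * ((k : ℝ) / 2 - 1) * Real.log (a / alphaK k) := by
    intro c lam a hc hc1 hlam hpsi ha0 haK
    have hc0 : (0:ℝ) < c := lt_trans (by positivity) hc
    have ht0 : (0:ℝ) < c * (k:ℝ) := by positivity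
    have ht2 : 2 < c * (k:ℝ) := by
      rw [div_lt_iff₀ hk0] at hc; linarith
    have htk : c * (k:ℝ) ≤ (k:ℝ) := by nlinarith
    have ha1 : a < 1 := haK.trans hα1
    have hz2 : (0:ℝ) < 1 - a := by linarith
    have hF : 0 < fE lam := fE_pos hlam.ne'
    -- psi facts
    have hden : Real.exp lam - 1 - lam ≠ 0 := by
      have := hF; unfold fE at this; linarith
    have hpsi' : lam * (Real.exp lam - 1) = c * (k:ℝ) * (Real.exp lam - 1 - lam) := by
      unfold psi at hpsi
      rw [if_neg hlam.ne'] at hpsi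
      rw [div_eq_iff hden] at hpsi
      exact hpsi
    have hlamsq : lam^2 = (c * (k:ℝ) - lam) * fE lam := by
      unfold fE; linear_combination hpsi'
    have hlamlt : lam < c * (k:ℝ) := by
      have h2 : 0 < (c * (k:ℝ) - lam) * fE lam := by rw [← hlamsq]; exact pow_pos hlam 2
      have h3 : 0 < c * (k:ℝ) - lam := by
        have h4 := div_pos h2 hF
        rwa [mul_div_cancel_right₀ _ hF.ne'] at h4
      linarith only [h3]
    have hquad : lam^2/2 ≤ fE lam := by
      have := Real.quadratic_le_exp_of_nonneg hlam.le
      unfold fE; linarith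
    have hlamge : c * (k:ℝ) - 2 ≤ lam := by
      have h1 : 0 ≤ c * (k:ℝ) - lam := by linarith only [hlamlt]
      have h2 : (c * (k:ℝ) - lam) * (lam^2/2) ≤ (c * (k:ℝ) - lam) * fE lam :=
        mul_le_mul_of_nonneg_left hquad h1
      have h3 : (c * (k:ℝ) - lam) * lam^2 ≤ 2 * lam^2 := by linarith only [h2, hlamsq]
      have h4 : c * (k:ℝ) - lam ≤ 2 := le_of_mul_le_mul_right h3 (pow_pos hlam 2)
      linarith only [h4]
    -- sqrt facts
    have hsa : 0 < Real.sqrt a := Real.sqrt_pos.2 ha0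
    have hst : 0 < Real.sqrt (c * (k:ℝ)) := Real.sqrt_pos.2 ht0
    have hz1 : 0 < Real.sqrt a / Real.sqrt (c * (k:ℝ)) := div_pos hsa hst
    have hterm2 : Real.log (a / (Real.sqrt a / Real.sqrt (c * (k:ℝ))))
        = (Real.log a + Real.log (c * (k:ℝ)))/2 := by
      rw [show a / (Real.sqrt a / Real.sqrt (c * (k:ℝ)))
          = Real.sqrt a * Real.sqrt (c * (k:ℝ)) by
        rw [div_eq_iff (ne_of_gt hz1), show Real.sqrt a * Real.sqrt (c * (k:ℝ))
            * (Real.sqrt a / Real.sqrt (c * (k:ℝ)))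
            = Real.sqrt a * Real.sqrt a * (Real.sqrt (c * (k:ℝ)) / Real.sqrt (c * (k:ℝ))) by
          ring, div_self hst.ne', mul_one, Real.mul_self_sqrt ha0.le]]
      rw [Real.log_mul hsa.ne' hst.ne', Real.log_sqrt ha0.le, Real.log_sqrt ht0.le]
      ring
    have hterm3 : Real.log ((1 - a) / (1 - a)) = 0 := by
      rw [div_self (ne_of_gt hz2), Real.log_one]
    -- core bound
    have hz1sq : (Real.sqrt a / Real.sqrt (c * (k:ℝ)))^2 = a/(c * (k:ℝ)) := by
      rw [div_pow, Real.sq_sqrt ha0.le, Real.sq_sqrt ht0.le]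
    set s1 := Real.sqrt a / Real.sqrt (c * (k:ℝ)) with hs1def
    set y := lam*(1-a) + lam^2*(a/(c * (k:ℝ)))/2 with hydef
    have hsum : fE (lam*(1 - a + s1)) + fE (lam*(1 - a - s1))
        = 2*Real.exp (lam*(1-a)) * Real.cosh (lam*s1) - 2 - 2*(lam*(1-a)) := by
      have hsplit1 : Real.exp (lam*(1 - a + s1)) = Real.exp (lam*(1-a)) * Real.exp (lam*s1) := by
        rw [← Real.exp_add]; congr 1; ring
      have hsplit2 : Real.exp (lam*(1 - a - s1)) = Real.exp (lam*(1-a)) * Real.exp (-(lam*s1)) := by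
        rw [← Real.exp_add]; congr 1; ring
      unfold fE
      rw [Real.cosh_eq, hsplit1, hsplit2]
      ring
    have hcosh : Real.cosh (lam*s1) ≤ Real.exp (lam^2*(a/(c * (k:ℝ)))/2) := by
      have h := Real.cosh_le_exp_half_sq (lam*s1)
      rwa [mul_pow, hz1sq] at h
    have hexpy : Real.exp (lam*(1-a)) * Real.exp (lam^2*(a/(c * (k:ℝ)))/2) = Real.exp y := by
      rw [hydef, ← Real.exp_add]
    have hNley : fE (lam*(1 - a + s1)) + fE (lam*(1 - a - s1))
        ≤ 2*(fE y) + 2*(lam^2*(a/(c * (k:ℝ)))/2) := by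
      rw [hsum]
      have h2 : 2*Real.exp (lam*(1-a)) * Real.cosh (lam*s1)
          ≤ 2*Real.exp y := by
        have h2a := mul_le_mul_of_nonneg_left hcosh
          (by positivity : (0:ℝ) ≤ 2*Real.exp (lam*(1-a)))
        have h2b : 2*Real.exp (lam*(1-a)) * Real.exp (lam^2*(a/(c * (k:ℝ)))/2)
            = 2*Real.exp y := by rw [mul_assoc, hexpy]
        linarith only [h2a, h2b]
      unfold fE
      linarith only [h2, hydef]
    have hy0 : 0 < y := by
      have h1 : 0 < lam*(1-a) := mul_pos hlam hz2
      have h2 : 0 ≤ lam^2*(a/(c * (k:ℝ)))/2 := by positivity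
      rw [hydef]; linarith
    have hylt : y < lam := by
      have hgap : lam - y = lam*a*(2*(c * (k:ℝ)) - lam)/(2*(c * (k:ℝ))) := by
        rw [hydef]; field_simp; ring
      have : 0 < lam*a*(2*(c * (k:ℝ)) - lam)/(2*(c * (k:ℝ))) := by
        apply div_pos
        · apply mul_pos (mul_pos hlam ha0); linarith
        · linarith
      have h5 : 0 < lam - y := by rw [hgap]; exact this
      linarith only [h5]
    have htangent : fE y ≤ fE lam * Real.exp ((Real.exp lam - 1) / fE lam * (y - lam)) := by
      have hlog := log_fE_tangent hy0 hylt
      calc fE y = Real.exp (Real.log (fE y)) := (Real.exp_log (fE_pos hy0.ne')).symm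
      _ ≤ Real.exp (Real.log (fE lam) + (Real.exp lam - 1) / fE lam * (y - lam)) :=
          Real.exp_le_exp.2 hlog
      _ = fE lam * Real.exp ((Real.exp lam - 1) / fE lam * (y - lam)) := by
          rw [Real.exp_add, Real.exp_log hF]
    have hphi : (Real.exp lam - 1) / fE lam * (y - lam) = -(c * (k:ℝ)*a - lam*a/2) := by
      have h1 : (Real.exp lam - 1) / fE lam = c * (k:ℝ)/lam := by
        rw [div_eq_div_iff hF.ne' hlam.ne']
        unfold fE
        linarith [hpsi']
      rw [h1, hydef]
      field_simp
      ring
    have hcond : c * (k:ℝ)*a - lam*a/2 ≤ Real.log (c * (k:ℝ)) := by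
      have h1 : c * (k:ℝ)*a - lam*a/2 ≤ a*(c * (k:ℝ)/2 + 1) := by
        have hm := mul_le_mul_of_nonneg_left hlamge ha0.le
        linarith only [hm]
      have h2 : a*(c * (k:ℝ)/2 + 1) ≤ alphaK k * (c * (k:ℝ)/2 + 1) :=
        mul_le_mul_of_nonneg_right haK.le (by linarith)
      exact h1.trans (h2.trans (alphaK_interp k hk ht2 htk))
    have hexpA : Real.exp (c * (k:ℝ)*a - lam*a/2) ≤ c * (k:ℝ) :=
      calc Real.exp (c * (k:ℝ)*a - lam*a/2) ≤ Real.exp (Real.log (c * (k:ℝ))) :=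
            Real.exp_le_exp.2 hcond
      _ = c * (k:ℝ) := Real.exp_log ht0
    have hinv : 1/(c * (k:ℝ)) ≤ Real.exp (-(c * (k:ℝ)*a - lam*a/2)) := by
      rw [Real.exp_neg, ← one_div]
      exact one_div_le_one_div_of_le (Real.exp_pos _) hexpA
    have hd : (c * (k:ℝ)*a - lam*a/2 - c * (k:ℝ)*a/2) * Real.exp (-(c * (k:ℝ)*a - lam*a/2))
        ≤ Real.exp (-(c * (k:ℝ)*a/2)) - Real.exp (-(c * (k:ℝ)*a - lam*a/2)) := by
      have h1 := Real.add_one_le_exp (c * (k:ℝ)*a - lam*a/2 - c * (k:ℝ)*a/2)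
      have h2 : Real.exp (-(c * (k:ℝ)*a - lam*a/2))
          * Real.exp (c * (k:ℝ)*a - lam*a/2 - c * (k:ℝ)*a/2) = Real.exp (-(c * (k:ℝ)*a/2)) := by
        rw [← Real.exp_add]; congr 1; ring
      have h3 := mul_le_mul_of_nonneg_left h1 (Real.exp_pos (-(c * (k:ℝ)*a - lam*a/2))).le
      linarith only [h2, h3]
    have hABnn : 0 ≤ c * (k:ℝ)*a - lam*a/2 - c * (k:ℝ)*a/2 := by
      have hm := mul_nonneg ha0.le (by linarith only [hlamlt] : 0 ≤ c * (k:ℝ) - lam)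
      linarith only [hm]
    have hfinal : fE lam * Real.exp (-(c * (k:ℝ)*a - lam*a/2)) + lam^2*(a/(c * (k:ℝ)))/2
        ≤ fE lam * Real.exp (-(c * (k:ℝ)*a/2)) := by
      have hε : lam^2*(a/(c * (k:ℝ)))/2
          = fE lam * ((c * (k:ℝ)*a - lam*a/2 - c * (k:ℝ)*a/2) * (1/(c * (k:ℝ)))) := by
        rw [hlamsq]; field_simp; ring
      have h3 : (c * (k:ℝ)*a - lam*a/2 - c * (k:ℝ)*a/2) * (1/(c * (k:ℝ)))
          ≤ (c * (k:ℝ)*a - lam*a/2 - c * (k:ℝ)*a/2) * Real.exp (-(c * (k:ℝ)*a - lam*a/2)) :=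
        mul_le_mul_of_nonneg_left hinv hABnn
      have h4 : fE lam * ((c * (k:ℝ)*a - lam*a/2 - c * (k:ℝ)*a/2) * (1/(c * (k:ℝ))))
          ≤ fE lam * (Real.exp (-(c * (k:ℝ)*a/2)) - Real.exp (-(c * (k:ℝ)*a - lam*a/2))) :=
        mul_le_mul_of_nonneg_left (h3.trans hd) hF.le
      rw [hε]
      linarith only [h4]
    have hN2 : fE (lam*(1 - a + s1)) + fE (lam*(1 - a - s1))
        ≤ 2*(fE lam * Real.exp (-(c * (k:ℝ)*a/2))) := by
      have ht' := htangent
      rw [hphi] at ht'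
      linarith only [hNley, hfinal, ht']
    have hN2pos : 0 < fE (lam*(1 - a + s1)) + fE (lam*(1 - a - s1)) := by
      have harg : 0 < lam*(1 - a + s1) := mul_pos hlam (by linarith)
      have h1 : 0 < fE (lam*(1 - a + s1)) := fE_pos harg.ne'
      have h2 := fE_nonneg (lam*(1 - a - s1))
      linarith only [h1, h2]
    have hcore : Real.log ((fE (lam*(1 - a + s1)) + fE (lam*(1 - a - s1))) / (2 * fE lam))
        ≤ -(c * (k:ℝ)*a/2) := by
      have hq : (fE (lam*(1 - a + s1)) + fE (lam*(1 - a - s1))) / (2 * fE lam)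
          ≤ Real.exp (-(c * (k:ℝ)*a/2)) := by
        rw [div_le_iff₀ (by linarith only [hF] : (0:ℝ) < 2 * fE lam)]
        linarith only [hN2]
      calc Real.log ((fE (lam*(1 - a + s1)) + fE (lam*(1 - a - s1))) / (2 * fE lam))
          ≤ Real.log (Real.exp (-(c * (k:ℝ)*a/2))) :=
            (Real.log_le_log_iff (div_pos hN2pos (by linarith only [hF] : (0:ℝ) < 2 * fE lam))
              (Real.exp_pos _)).2 hq
      _ = -(c * (k:ℝ)*a/2) := Real.log_exp _
    -- entropy bound
    have hEnt : Hent a ≤ -(a*Real.log a) + a := by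
      unfold Hent
      have h := Real.log_le_sub_one_of_pos (show (0:ℝ) < (1-a)⁻¹ by positivity)
      rw [Real.log_inv] at h
      have h2 : (1-a) * (1-a)⁻¹ = 1 := mul_inv_cancel₀ (ne_of_gt hz2)
      have h3 := mul_le_mul_of_nonneg_left h hz2.le
      linarith only [h3, h2]
    -- final assembly
    have hlogt : Real.log (c * (k:ℝ)) ≤ Real.log (k:ℝ) :=
      (Real.log_le_log_iff ht0 hk0).2 htk
    have hlogα : Real.log (alphaK k) = 1 - (k:ℝ)/((k:ℝ)-2)*Real.log (k:ℝ) := by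
      unfold alphaK
      rw [Real.log_mul (Real.exp_ne_zero 1) (Real.rpow_pos_of_pos hk0 _).ne',
        Real.log_exp, Real.log_rpow hk0]
      ring
    have P1 : c * Hent a ≤ c*a - c*(a*Real.log a) := by
      have := mul_le_mul_of_nonneg_left hEnt hc0.le
      linarith only [this]
    have P2 : (c*(k:ℝ)*a/2)*Real.log (c * (k:ℝ)) ≤ (c*(k:ℝ)*a/2)*Real.log (k:ℝ) :=
      mul_le_mul_of_nonneg_left hlogt (by positivity)
    have P4 : c*a*((k:ℝ)/2-1)*((k:ℝ)/((k:ℝ)-2)) = c*(k:ℝ)*a/2 := by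
      have hne : (k:ℝ) - 2 ≠ 0 := by linarith
      field_simp
    have P4' : c*a*((k:ℝ)/2-1)*((k:ℝ)/((k:ℝ)-2))*Real.log (k:ℝ)
        = c*(k:ℝ)*a/2*Real.log (k:ℝ) := by rw [P4]
    unfold Hk
    rw [hterm2, hterm3, Real.log_div (ne_of_gt ha0) (ne_of_gt hα_pos), hlogα]
    linarith only [P1, P2, P4', hcore]
  refine ⟨hmain, ?_, fun a ha => by linarith, by linarith⟩
  intro δ hδ0 hδ99
  have h99 : Real.log 0.99 < 0 := Real.log_neg (by norm_num) (by norm_num)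
  refine ⟨δ/(k:ℝ) * (-Real.log 0.99) / 2,
    div_pos (mul_pos (div_pos hδ0 hk0) (neg_pos.2 h99)) (by norm_num), ?_⟩
  intro c lam a hc hc1 hlam hpsi hδa ha99
  have ha0 : 0 < a := lt_of_lt_of_le hδ0 hδa
  have haK : a < alphaK k := lt_of_le_of_lt ha99 (by nlinarith [hα_pos])
  have hi := hmain c lam a hc hc1 hlam hpsi ha0 haK
  have hfrac : a / alphaK k ≤ 0.99 := (div_le_iff₀ hα_pos).2 (by linarith)
  have hlogr : Real.log (a/alphaK k) ≤ Real.log 0.99 :=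
    (Real.log_le_log_iff (by positivity) (by norm_num)).2 hfrac
  have hc0 : (0:ℝ) < c := lt_trans (by positivity) hc
  have hX : δ/(k:ℝ) ≤ c*a*((k:ℝ)/2-1) := by
    have h1 : 2/(k:ℝ) ≤ c := hc.le
    have h2 : δ/(k:ℝ) = (2/(k:ℝ))*δ*(1/2) := by ring
    have h3 : (2/(k:ℝ))*δ*(1/2) ≤ c*δ*(1/2) := by
      apply mul_le_mul_of_nonneg_right (mul_le_mul_of_nonneg_right h1 hδ0.le) (by norm_num)
    have h4 : c*δ*(1/2) ≤ c*a*(1/2) := by nlinarith [hδa, hc0]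
    have h5 : c*a*(1/2) ≤ c*a*((k:ℝ)/2-1) := by
      apply mul_le_mul_of_nonneg_left _ (by positivity : (0:ℝ) ≤ c*a)
      linarith
    rw [h2]; linarith [h3, h4, h5]
  have t1 : c*a*((k:ℝ)/2-1)*Real.log (a/alphaK k) ≤ c*a*((k:ℝ)/2-1)*Real.log 0.99 := by
    apply mul_le_mul_of_nonneg_left hlogr
    have := mul_nonneg (mul_nonneg hc0.le ha0.le) (show (0:ℝ) ≤ (k:ℝ)/2-1 by linarith)
    linarith
  have t2 : c*a*((k:ℝ)/2-1)*Real.log 0.99 ≤ (δ/(k:ℝ))*Real.log 0.99 :=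
    mul_le_mul_of_nonpos_right hX h99.le
  have hlast := mul_pos (div_pos hδ0 hk0) (neg_pos.2 h99)
  nlinarith [hi, t1, t2, hlast]
end

section
/- For all real x ∈ [0,1], H(1/2 − x/2) ≤ ln(4/(x² + 2)), where H(α) = −α ln α − (1−α) ln(1−α) is the binary entropy function (natural logarithm), with the convention 0·ln 0 = 0. -/
/-- The binary entropy function `H(α) = −α ln α − (1−α) ln(1−α)` (natural logarithm);
since `Real.log 0 = 0` in Mathlib, the convention `0·ln 0 = 0` holds automatically. -/
noncomputable def binEntropy (a : ℝ) : ℝ :=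
  -a * Real.log a - (1 - a) * Real.log (1 - a)

lemma binEntropy_eq (a : ℝ) : binEntropy a = Real.binEntropy a := by
  simp [binEntropy, Real.binEntropy, Real.log_inv]; ring

/-- artanh-type inequality: `2x ≤ log (1+x) - log (1-x)` on `[0,1)`. -/
lemma two_mul_le_log_sub_log (x : ℝ) (hx0 : 0 ≤ x) (hx1 : x < 1) :
    2 * x ≤ Real.log (1 + x) - Real.log (1 - x) := by
  set g : ℝ → ℝ := fun t => Real.log (1 + t) - Real.log (1 - t) - 2 * t with hg
  have hD : ∀ t ∈ Set.Ioo (0:ℝ) x, HasDerivAt g (1/(1+t) - (-1)/(1-t) - 2*1) t := by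
    intro t ht
    have h1 : (0:ℝ) < 1 + t := by linarith [ht.1]
    have h2 : (0:ℝ) < 1 - t := by linarith [ht.2, hx1]
    have d1 : HasDerivAt (fun t : ℝ => Real.log (1 + t)) (1/(1+t)) t := by
      simpa using (((hasDerivAt_id t).const_add 1).log h1.ne')
    have d2 : HasDerivAt (fun t : ℝ => Real.log (1 - t)) ((-1)/(1-t)) t :=
      ((hasDerivAt_id t).const_sub 1).log h2.ne'
    exact (d1.sub d2).sub ((hasDerivAt_id t).const_mul 2)
  have key : MonotoneOn g (Set.Icc 0 x) := by
    apply monotoneOn_of_deriv_nonneg (convex_Icc 0 x)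
    · apply ContinuousOn.sub (ContinuousOn.sub ?_ ?_) (by fun_prop)
      · apply Real.continuousOn_log.comp (by fun_prop)
        intro t ht
        simp only [Set.mem_Icc] at ht
        have : (0:ℝ) < 1 + t := by linarith [ht.1]
        simp [this.ne']
      · apply Real.continuousOn_log.comp (by fun_prop)
        intro t ht
        simp only [Set.mem_Icc] at ht
        have : (0:ℝ) < 1 - t := by linarith [ht.2, hx1]
        simp [this.ne']
    · intro t ht
      rw [interior_Icc] at ht
      exact (hD t ht).differentiableAt.differentiableWithinAt
    · intro t ht
      rw [interior_Icc] at ht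
      rw [(hD t ht).deriv]
      have h1 : (0:ℝ) < 1 + t := by linarith [ht.1]
      have h2 : (0:ℝ) < 1 - t := by linarith [ht.2, hx1]
      have heq : 1/(1+t) - (-1)/(1-t) - 2*1 = 2*t^2/((1+t)*(1-t)) := by
        field_simp; ring
      rw [heq]; positivity
  have h0 : g 0 = 0 := by simp [hg]
  have := key (Set.left_mem_Icc.2 hx0) (Set.right_mem_Icc.2 hx0) hx0
  rw [h0] at this
  simp only [hg] at this
  linarith

/-- For all `x ∈ [0,1]`, `H(1/2 − x/2) ≤ ln(4/(x² + 2))`. -/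
theorem entropy_le_log_bound (x : ℝ) (hx0 : 0 ≤ x) (hx1 : x ≤ 1) :
    binEntropy (1 / 2 - x / 2) ≤ Real.log (4 / (x ^ 2 + 2)) := by
  set f : ℝ → ℝ := fun t => Real.log 4 - Real.log (t^2 + 2) - Real.binEntropy (1/2 - t/2)
    with hf
  have hD : ∀ t ∈ Set.Ioo (0:ℝ) 1,
      HasDerivAt f (-(2*t/(t^2+2)) -
        (Real.log (1 - (1/2 - t/2)) - Real.log (1/2 - t/2)) * (-(1/2))) t := by
    intro t ht
    have hp0 : (1/2 - t/2 : ℝ) ≠ 0 := by simp only [Set.mem_Ioo] at ht; intro h; linarith [ht.2]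
    have hp1 : (1/2 - t/2 : ℝ) ≠ 1 := by simp only [Set.mem_Ioo] at ht; intro h; linarith [ht.1]
    have d1 : HasDerivAt (fun t : ℝ => Real.log (t^2 + 2)) (2*t/(t^2+2)) t := by
      have : HasDerivAt (fun t : ℝ => t^2 + 2) (2*t) t := by
        simpa using (hasDerivAt_pow 2 t).add_const 2
      simpa using this.log (by positivity)
    have dl : HasDerivAt (fun t : ℝ => 1/2 - t/2) (-(1/2)) t :=
      ((hasDerivAt_id t).div_const 2).const_sub (1/2)
    have d2 : HasDerivAt (fun t : ℝ => Real.binEntropy (1/2 - t/2))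
        ((Real.log (1 - (1/2 - t/2)) - Real.log (1/2 - t/2)) * (-(1/2))) t :=
      HasDerivAt.comp (h := fun t : ℝ => 1/2 - t/2) t (Real.hasDerivAt_binEntropy hp0 hp1) dl
    exact (d1.const_sub (Real.log 4)).sub d2
  have key : MonotoneOn f (Set.Icc 0 1) := by
    apply monotoneOn_of_deriv_nonneg (convex_Icc 0 1)
    · apply ContinuousOn.sub
      · apply Continuous.continuousOn
        apply Continuous.sub continuous_const
        exact Continuous.log (by fun_prop) (fun t => by positivity)
      · exact (Real.binEntropy_continuous.comp (by fun_prop)).continuousOn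
    · intro t ht
      rw [interior_Icc] at ht
      exact (hD t ht).differentiableAt.differentiableWithinAt
    · intro t ht
      rw [interior_Icc] at ht
      rw [(hD t ht).deriv]
      have h1 : (0:ℝ) ≤ t := le_of_lt ht.1
      have h2 : t < 1 := ht.2
      have hart := two_mul_le_log_sub_log t h1 h2
      have e1 : (1 : ℝ) - (1/2 - t/2) = (1 + t)/2 := by ring
      have e2 : (1/2 - t/2 : ℝ) = (1 - t)/2 := by ring
      have l1 : Real.log ((1 + t)/2) = Real.log (1 + t) - Real.log 2 :=
        Real.log_div (by linarith) (by norm_num)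
      have l2 : Real.log ((1 - t)/2) = Real.log (1 - t) - Real.log 2 :=
        Real.log_div (by intro h; linarith [h]) (by norm_num)
      rw [e1, e2, l1, l2]
      have hq : 2*t/(t^2+2) ≤ t := by
        rw [div_le_iff₀ (by positivity)]
        nlinarith
      nlinarith
  have h0 : f 0 = 0 := by
    have hb : Real.binEntropy (1/2 - 0/2 : ℝ) = Real.log 2 := by
      rw [show (1/2 - 0/2 : ℝ) = 2⁻¹ by norm_num, Real.binEntropy_two_inv]
    simp only [hf, hb]
    rw [show (4:ℝ) = 2^2 by norm_num, Real.log_pow]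
    norm_num
    ring
  have hle := key (Set.left_mem_Icc.2 (by norm_num)) (Set.mem_Icc.2 ⟨hx0, hx1⟩) hx0
  rw [h0] at hle
  simp only [hf] at hle
  rw [binEntropy_eq]
  have hlog : Real.log (4 / (x ^ 2 + 2)) = Real.log 4 - Real.log (x^2+2) :=
    Real.log_div (by norm_num) (by positivity)
  rw [hlog]
  linarith
end

section
/- For all real λ > 0 and all real ζ ≥ 0, with f(x) = e^x − 1 − x, one has f(λζ) ≤ f(λ) · exp((ζ − 1) · λ f'(λ)/f(λ)), i.e. f(λζ)/f(λ) ≤ exp((ζ − 1) · λ(e^λ − 1)/(e^λ − 1 − λ)). -/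
open Real Set

private lemma f_pos_aux {t : ℝ} (ht : 0 < t) : 0 < Real.exp t - 1 - t := by
  have := Real.add_one_lt_exp (ne_of_gt ht)
  linarith

private lemma f_hasDeriv (t : ℝ) :
    HasDerivAt (fun x : ℝ => Real.exp x - 1 - x) (Real.exp t - 1) t := by
  exact ((Real.hasDerivAt_exp t).sub_const 1).sub (hasDerivAt_id' t)

/-- ψ(t) = f'(t)/f(t) is antitone on (0,∞). -/
private lemma psi_antitone :
    AntitoneOn (fun t : ℝ => (Real.exp t - 1) / (Real.exp t - 1 - t)) (Set.Ioi 0) := by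
  have hderiv : ∀ t ∈ Set.Ioi (0:ℝ),
      HasDerivAt (fun t : ℝ => (Real.exp t - 1) / (Real.exp t - 1 - t))
        ((Real.exp t * (Real.exp t - 1 - t) - (Real.exp t - 1) * (Real.exp t - 1)) /
          (Real.exp t - 1 - t) ^ 2) t := by
    intro t ht
    exact ((Real.hasDerivAt_exp t).sub_const 1).div (f_hasDeriv t) (ne_of_gt (f_pos_aux ht))
  apply antitoneOn_of_deriv_nonpos (convex_Ioi 0)
  · exact (continuous_exp.sub continuous_const).continuousOn.div
      ((continuous_exp.sub continuous_const).sub continuous_id).continuousOn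
      (fun x hx => ne_of_gt (f_pos_aux hx))
  · intro t ht
    rw [interior_Ioi] at ht
    exact ((hderiv t ht).differentiableAt).differentiableWithinAt
  · intro t ht
    rw [interior_Ioi] at ht
    rw [(hderiv t ht).deriv]
    apply div_nonpos_of_nonpos_of_nonneg _ (sq_nonneg _)
    have h1 : (1 - t) * Real.exp t ≤ 1 := by
      have h := Real.add_one_le_exp (-t)
      have := mul_le_mul_of_nonneg_right h (Real.exp_pos t).le
      rw [← Real.exp_add, neg_add_cancel, Real.exp_zero] at this
      nlinarith
    nlinarith [Real.exp_pos t]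

/-- For `λ > 0` and `ζ ≥ 0`, with `f(x) = e^x − 1 − x`,
`f(λζ) ≤ f(λ)·exp((ζ − 1)·λ f'(λ)/f(λ))`, i.e.
`f(λζ)/f(λ) ≤ exp((ζ − 1)·λ(e^λ − 1)/(e^λ − 1 − λ))`. -/
theorem f_ratio_exp_bound (lam ζ : ℝ) (hlam : 0 < lam) (hζ : 0 ≤ ζ) :
    Real.exp (lam * ζ) - 1 - lam * ζ ≤
      (Real.exp lam - 1 - lam) *
        Real.exp ((ζ - 1) * (lam * (Real.exp lam - 1) / (Real.exp lam - 1 - lam))) := by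
  set c : ℝ := lam * (Real.exp lam - 1) / (Real.exp lam - 1 - lam) with hc
  have hflam : 0 < Real.exp lam - 1 - lam := f_pos_aux hlam
  rcases eq_or_lt_of_le hζ with hz0 | hz0
  · rw [← hz0]
    simp only [mul_zero, Real.exp_zero, sub_zero, sub_self]
    positivity
  set G : ℝ → ℝ := fun z => (z - 1) * c - Real.log (Real.exp (lam * z) - 1 - lam * z) with hG
  have hGderiv : ∀ z ∈ Set.Ioi (0:ℝ),
      HasDerivAt G (c - lam * ((Real.exp (lam*z) - 1) / (Real.exp (lam*z) - 1 - lam*z))) z := by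
    intro z hz
    have hzl : 0 < lam * z := mul_pos hlam hz
    have hinner : HasDerivAt (fun z : ℝ => Real.exp (lam * z) - 1 - lam * z)
        ((Real.exp (lam * z) - 1) * lam) z := by
      have h0 : HasDerivAt (fun z : ℝ => lam * z) lam z := by
        simpa using (hasDerivAt_id z).const_mul lam
      exact (f_hasDeriv (lam * z)).comp z h0
    have hlog := hinner.log (ne_of_gt (f_pos_aux hzl))
    have h1 : HasDerivAt (fun z : ℝ => (z - 1) * c) c z := by
      simpa using ((hasDerivAt_id z).sub_const 1).mul_const c
    have := h1.sub hlog
    exact this.congr_deriv (by ring)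
  have hGcont : ContinuousOn G (Set.Ioi 0) := fun z hz =>
    ((hGderiv z hz).differentiableAt).continuousAt.continuousWithinAt
  have hG1 : G 1 = - Real.log (Real.exp lam - 1 - lam) := by simp [hG]
  have hc' : c = lam * ((Real.exp lam - 1) / (Real.exp lam - 1 - lam)) := by
    rw [hc]; ring
  have hkey : G 1 ≤ G ζ := by
    have hpsi := psi_antitone
    rcases le_total 1 ζ with h1z | h1z
    · have hmono : MonotoneOn G (Set.Ici 1) := by
        apply monotoneOn_of_deriv_nonneg (convex_Ici 1)
        · exact hGcont.mono (fun x hx => Set.mem_Ioi.2 (lt_of_lt_of_le one_pos hx))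
        · intro z hz
          rw [interior_Ici] at hz
          exact ((hGderiv z (Set.mem_Ioi.2 (lt_trans one_pos hz))).differentiableAt).differentiableWithinAt
        · intro z hz
          rw [interior_Ici] at hz
          have hz0' : (0:ℝ) < z := lt_trans one_pos hz
          rw [(hGderiv z hz0').deriv]
          have hle : lam ≤ lam * z := by nlinarith [Set.mem_Ioi.1 hz]
          have := hpsi (Set.mem_Ioi.2 hlam) (Set.mem_Ioi.2 (mul_pos hlam hz0')) hle
          rw [hc']
          nlinarith
      exact hmono (Set.mem_Ici.2 le_rfl) (Set.mem_Ici.2 h1z) h1z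
    · have hanti : AntitoneOn G (Set.Ioc 0 1) := by
        apply antitoneOn_of_deriv_nonpos (convex_Ioc 0 1)
        · exact hGcont.mono (fun x hx => hx.1)
        · intro z hz
          rw [interior_Ioc] at hz
          exact ((hGderiv z hz.1).differentiableAt).differentiableWithinAt
        · intro z hz
          rw [interior_Ioc] at hz
          rw [(hGderiv z hz.1).deriv]
          have hle : lam * z ≤ lam := by nlinarith [hz.2, hz.1]
          have := hpsi (Set.mem_Ioi.2 (mul_pos hlam hz.1)) (Set.mem_Ioi.2 hlam) hle
          rw [hc']
          nlinarith
      exact hanti (Set.mem_Ioc.2 ⟨hz0, h1z⟩) (Set.mem_Ioc.2 ⟨one_pos, le_rfl⟩) h1z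
  have hfz : 0 < Real.exp (lam * ζ) - 1 - lam * ζ := f_pos_aux (mul_pos hlam hz0)
  rw [hG1, hG] at hkey
  simp only at hkey
  have hlog : Real.log (Real.exp (lam * ζ) - 1 - lam * ζ) ≤
      Real.log (Real.exp lam - 1 - lam) + (ζ - 1) * c := by linarith
  calc Real.exp (lam * ζ) - 1 - lam * ζ
      = Real.exp (Real.log (Real.exp (lam * ζ) - 1 - lam * ζ)) := (Real.exp_log hfz).symm
    _ ≤ Real.exp (Real.log (Real.exp lam - 1 - lam) + (ζ - 1) * c) := Real.exp_le_exp.2 hlog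
    _ = (Real.exp lam - 1 - lam) * Real.exp ((ζ - 1) * c) := by
        rw [Real.exp_add, Real.exp_log hflam]
end
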